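/- Let n ≥ 1, let A₋ ∈ Oₙ⁻, let v ∈ ℝⁿ be a unit vector, and set A₊ = A₋(I − 2 v vᵀ). Define s(z) = 1 − (1 + e^{√2 z})⁻¹ and Θ(z) = s(z) A₊ + (1 − s(z)) A₋. Then Θ is twice differentiable and satisfies Θ''(z) = Θ(z)Θ(z)ᵀΘ(z) − Θ(z) for all z ∈ ℝ, with Θ(z) → A₊ as z → +∞ and Θ(z) → A₋ as z → −∞. -/

import Mathlib

open Matrix Filter Topology

attribute [local instance] Matrix.frobeniusNormedAddCommGroup Matrix.frobeniusNormedSpace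

noncomputable def sProfile (z : ℝ) : ℝ := 1 - (1 + Real.exp (Real.sqrt 2 * z))⁻¹

lemma sProfile_hasDerivAt (z : ℝ) :
    HasDerivAt sProfile (Real.sqrt 2 * (sProfile z * (1 - sProfile z))) z := by
  have hu : (0:ℝ) < 1 + Real.exp (Real.sqrt 2 * z) := by positivity
  have h1 : HasDerivAt (fun z : ℝ => Real.exp (Real.sqrt 2 * z))
      (Real.exp (Real.sqrt 2 * z) * Real.sqrt 2) z := by
    simpa using ((hasDerivAt_id z).const_mul (Real.sqrt 2)).exp
  have h2 : HasDerivAt (fun z : ℝ => 1 + Real.exp (Real.sqrt 2 * z))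
      (Real.exp (Real.sqrt 2 * z) * Real.sqrt 2) z := h1.const_add 1
  have h3 := (h2.inv (ne_of_gt hu)).const_sub 1
  have : HasDerivAt (fun z : ℝ => 1 - (1 + Real.exp (Real.sqrt 2 * z))⁻¹)
      (Real.exp (Real.sqrt 2 * z) * Real.sqrt 2 / (1 + Real.exp (Real.sqrt 2 * z)) ^ 2) z := by
    exact h3.congr_deriv (by ring)
  have heq : Real.exp (Real.sqrt 2 * z) * Real.sqrt 2 / (1 + Real.exp (Real.sqrt 2 * z)) ^ 2
      = Real.sqrt 2 * (sProfile z * (1 - sProfile z)) := by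
    unfold sProfile
    field_simp
    ring
  rw [← heq]
  exact this

lemma sProfile_deriv_hasDerivAt (z : ℝ) :
    HasDerivAt (fun z => Real.sqrt 2 * (sProfile z * (1 - sProfile z)))
      (2 * sProfile z * (1 - sProfile z) * (1 - 2 * sProfile z)) z := by
  have h := sProfile_hasDerivAt z
  have h2 : HasDerivAt (fun z => sProfile z * (1 - sProfile z))
      (Real.sqrt 2 * (sProfile z * (1 - sProfile z)) * (1 - sProfile z)
        + sProfile z * (-(Real.sqrt 2 * (sProfile z * (1 - sProfile z))))) z :=
    h.mul (h.const_sub 1)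
  have h3 := h2.const_mul (Real.sqrt 2)
  refine h3.congr_deriv ?_
  have hs2 : Real.sqrt 2 ^ 2 = 2 := Real.sq_sqrt (by norm_num)
  linear_combination (sProfile z * (1 - sProfile z) * (1 - 2 * sProfile z)) * hs2

lemma key_matrix {n : ℕ} (Am P : Matrix (Fin n) (Fin n) ℝ)
    (h1 : Am * Amᵀ = 1) (h2 : Amᵀ * Am = 1) (hP : P * P = P) (hPt : Pᵀ = P) (c : ℝ) :
    (Am - c • (Am * P)) * (Am - c • (Am * P))ᵀ * (Am - c • (Am * P)) - (Am - c • (Am * P))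
      = (-c^3 + 3*c^2 - 2*c) • (Am * P) := by
  have h2' : ∀ X : Matrix (Fin n) (Fin n) ℝ, Amᵀ * (Am * X) = X := by
    intro X; rw [← Matrix.mul_assoc, h2, one_mul]
  have h1' : ∀ X : Matrix (Fin n) (Fin n) ℝ, Am * (Amᵀ * X) = X := by
    intro X; rw [← Matrix.mul_assoc, h1, one_mul]
  have hP' : ∀ X : Matrix (Fin n) (Fin n) ℝ, P * (P * X) = P * X := by
    intro X; rw [← Matrix.mul_assoc, hP]
  simp only [Matrix.transpose_sub, Matrix.transpose_smul, Matrix.transpose_mul, hPt,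
    Matrix.sub_mul, Matrix.mul_sub, Matrix.smul_mul, Matrix.mul_smul, Matrix.mul_assoc,
    h1, h2, h1', h2', hP, hP', Matrix.mul_one, Matrix.one_mul, smul_smul]
  module

theorem stmt7 {n : ℕ} (hn : 1 ≤ n) (Aminus : Matrix (Fin n) (Fin n) ℝ)
    (hAm : Aminus * Aminusᵀ = 1) (hAmdet : Aminus.det = -1)
    (v : EuclideanSpace ℝ (Fin n)) (hv : ‖v‖ = 1)
    (Aplus : Matrix (Fin n) (Fin n) ℝ)
    (hAp : Aplus = Aminus * (1 - (2 : ℝ) • Matrix.vecMulVec (v : Fin n → ℝ) (v : Fin n → ℝ)))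
    (Θ : ℝ → Matrix (Fin n) (Fin n) ℝ)
    (hΘ : Θ = fun z => sProfile z • Aplus + (1 - sProfile z) • Aminus) :
    Differentiable ℝ Θ ∧ Differentiable ℝ (deriv Θ) ∧
    (∀ z : ℝ, deriv (deriv Θ) z = Θ z * (Θ z)ᵀ * Θ z - Θ z) ∧
    Tendsto Θ atTop (𝓝 Aplus) ∧ Tendsto Θ atBot (𝓝 Aminus) := by
  set P : Matrix (Fin n) (Fin n) ℝ := Matrix.vecMulVec (v : Fin n → ℝ) (v : Fin n → ℝ) with hPdef
  set C : Matrix (Fin n) (Fin n) ℝ := Aplus - Aminus with hCdef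
  -- basic facts
  have hAm2 : Aminusᵀ * Aminus = 1 := mul_eq_one_comm.mp hAm
  have hsum : ∑ k : Fin n, (v : Fin n → ℝ) k * (v : Fin n → ℝ) k = 1 := by
    have := real_inner_self_eq_norm_sq v
    rw [hv] at this
    simp only [PiLp.inner_apply, RCLike.inner_apply, conj_trivial] at this
    simpa using this
  have hPP : P * P = P := by
    ext i j
    simp only [hPdef, Matrix.mul_apply, Matrix.vecMulVec_apply]
    have : ∀ k, (v : Fin n → ℝ) i * v k * (v k * v j) = (v k * v k) * (v i * v j) := by
      intro k; ring
    rw [Finset.sum_congr rfl fun k _ => this k, ← Finset.sum_mul, hsum, one_mul]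
  have hPt : Pᵀ = P := by
    ext i j
    simp [hPdef, Matrix.vecMulVec_apply, mul_comm]
  have hΘ' : Θ = fun z => Aminus + sProfile z • C := by
    funext z
    rw [hΘ, hCdef]
    module
  have hC : C = (-(2:ℝ)) • (Aminus * P) := by
    rw [hCdef, hAp, Matrix.mul_sub, Matrix.mul_one, Matrix.mul_smul]
    module
  -- derivatives
  have hd1 : ∀ z, HasDerivAt Θ ((Real.sqrt 2 * (sProfile z * (1 - sProfile z))) • C) z := by
    intro z
    rw [hΘ']
    exact ((sProfile_hasDerivAt z).smul_const C).const_add Aminus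
  have hderiv1 : deriv Θ = fun z => (Real.sqrt 2 * (sProfile z * (1 - sProfile z))) • C := by
    funext z; exact (hd1 z).deriv
  have hd2 : ∀ z, HasDerivAt (deriv Θ)
      ((2 * sProfile z * (1 - sProfile z) * (1 - 2 * sProfile z)) • C) z := by
    intro z
    rw [hderiv1]
    exact (sProfile_deriv_hasDerivAt z).smul_const C
  refine ⟨fun z => (hd1 z).differentiableAt, fun z => (hd2 z).differentiableAt, ?_, ?_, ?_⟩
  · intro z
    have hΘz : Θ z = Aminus - (2 * sProfile z) • (Aminus * P) := by
      rw [hΘ', hC]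
      simp only [smul_smul]
      module
    rw [show deriv (deriv Θ) z = _ from (hd2 z).deriv, hΘz, key_matrix Aminus P hAm hAm2 hPP hPt (2 * sProfile z), hC]
    rw [smul_smul]
    congr 1
    ring
  · -- atTop
    have hexp : Tendsto (fun z : ℝ => Real.exp (Real.sqrt 2 * z)) atTop atTop := by
      apply Real.tendsto_exp_atTop.comp
      exact Tendsto.const_mul_atTop (by positivity) tendsto_id
    have hs : Tendsto sProfile atTop (𝓝 1) := by
      have : Tendsto (fun z : ℝ => (1 + Real.exp (Real.sqrt 2 * z))⁻¹) atTop (𝓝 0) :=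
        (tendsto_atTop_add_const_left _ 1 hexp).inv_tendsto_atTop
      have h : Tendsto (fun z : ℝ => 1 - (1 + Real.exp (Real.sqrt 2 * z))⁻¹) atTop (𝓝 (1 - 0)) :=
        Tendsto.sub tendsto_const_nhds this
      unfold sProfile
      simpa using h
    rw [hΘ']
    have hT : Tendsto (fun z => Aminus + sProfile z • C) atTop (𝓝 (Aminus + (1:ℝ) • C)) :=
      Tendsto.add tendsto_const_nhds (Tendsto.smul_const hs C)
    simpa [hCdef] using hT
  · -- atBot
    have hexp : Tendsto (fun z : ℝ => Real.exp (Real.sqrt 2 * z)) atBot (𝓝 0) := by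
      apply Real.tendsto_exp_atBot.comp
      exact Tendsto.const_mul_atBot (by positivity) tendsto_id
    have hs : Tendsto sProfile atBot (𝓝 0) := by
      have h1 : Tendsto (fun z : ℝ => 1 + Real.exp (Real.sqrt 2 * z)) atBot (𝓝 1) := by
        simpa using tendsto_const_nhds.add hexp
      have h2 : Tendsto (fun z : ℝ => (1 + Real.exp (Real.sqrt 2 * z))⁻¹) atBot (𝓝 1) := by
        simpa using h1.inv₀ (by norm_num)
      have h : Tendsto (fun z : ℝ => 1 - (1 + Real.exp (Real.sqrt 2 * z))⁻¹) atBot (𝓝 (1 - 1)) :=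
        Tendsto.sub tendsto_const_nhds h2
      unfold sProfile
      simpa using h
    rw [hΘ']
    have hT : Tendsto (fun z => Aminus + sProfile z • C) atBot (𝓝 (Aminus + (0:ℝ) • C)) :=
      Tendsto.add tendsto_const_nhds (Tendsto.smul_const hs C)
    simpa using hT
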